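/- For every integer n ≥ 2, every p with 1/2 ≤ p < 1, and d = 2n − 2, there exists a d-dependent random graph distribution G(n,p,d) such that with probability 1 the sampled graph contains a clique on at least n/2 vertices. -/

import Mathlib

/-- A `d`-dependent random graph distribution `G(n, p, d)`: a probability space with
Boolean random variables `X e`, one for each unordered pair `e` of distinct vertices of
`Fin n`, each equal to `true` with probability `p`, such that each `X e` is independent of
the joint family of all variables at pairs outside a set `N e` of at most `d` other pairs. -/
structure DepGraph (n : ℕ) (p : ℝ) (d : ℕ) where
  Ω : Type
  [mΩ : MeasurableSpace Ω]
  μ : MeasureTheory.Measure Ω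
  [probμ : MeasureTheory.IsProbabilityMeasure μ]
  X : Sym2 (Fin n) → Ω → Bool
  meas : ∀ e, Measurable (X e)
  edgeProb : ∀ e : Sym2 (Fin n), ¬ e.IsDiag → μ {ω | X e ω = true} = ENNReal.ofReal p
  locDep : ∀ e : Sym2 (Fin n), ¬ e.IsDiag →
    ∃ N : Finset (Sym2 (Fin n)), e ∉ N ∧ N.card ≤ d ∧
      ProbabilityTheory.IndepFun (X e)
        (fun ω (f : {f : Sym2 (Fin n) // ¬ f.IsDiag ∧ f ∉ N ∧ f ≠ e}) => X f.1 ω) μ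

attribute [instance] DepGraph.mΩ DepGraph.probμ

open MeasureTheory ProbabilityTheory

/-- The random simple graph sampled from a `d`-dependent random graph distribution:
`i` and `j` are adjacent iff `i ≠ j` and `X {i,j} = true`. -/
def DepGraph.graph {n : ℕ} {p : ℝ} {d : ℕ} (G : DepGraph n p d) (ω : G.Ω) :
    SimpleGraph (Fin n) where
  Adj i j := i ≠ j ∧ G.X s(i, j) ω = true
  symm := by
    constructor
    intro i j h
    refine ⟨h.1.symm, ?_⟩
    rw [Sym2.eq_swap]
    exact h.2
  loopless := ⟨fun i h => h.1 rfl⟩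

/-- A set `s` of vertices is uncorrelated if the edge variables at any two distinct pairs
of vertices of `s` are independent. -/
def DepGraph.Uncorrelated {n : ℕ} {p : ℝ} {d : ℕ} (G : DepGraph n p d)
    (s : Finset (Fin n)) : Prop :=
  ∀ e e' : Sym2 (Fin n), ¬ e.IsDiag → ¬ e'.IsDiag → e ≠ e' →
    (∀ v ∈ e, v ∈ s) → (∀ v ∈ e', v ∈ s) →
    IndepFun (G.X e) (G.X e') G.μ

/-! Give each vertex `v` an independent label `ω v`, uniform on `(0, 1]`, and make `{u, v}` a
non-edge exactly when one of the two labels lies in `(p - 1/2, 1/2]` and the other in `(1/2, 1]`.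
A pair is then an edge with probability `1 - 2 (1 - p) / 2 = p`, and its indicator is a function
of its two labels, hence independent of all pairs disjoint from it; at most `2n - 2` pairs meet a
given pair. Two vertices whose labels lie on the same side of `1/2` are always adjacent, so the
larger side is a clique on at least `n/2` vertices, for every outcome. -/

open Set Function
open scoped Finset

namespace ProbabilityTheory

theorem indepFun_pi_of_dependsOn {ι : Type*} [Fintype ι] {α : ι → Type*}
    [∀ i, MeasurableSpace (α i)] {μ : ∀ i, Measure (α i)} [∀ i, IsProbabilityMeasure (μ i)]
    {β γ : Type*} [MeasurableSpace β] [MeasurableSpace γ]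
    {Y : (∀ i, α i) → β} {Z : (∀ i, α i) → γ} {S T : Finset ι} (hST : Disjoint S T)
    (hY : Measurable Y) (hZ : Measurable Z) (hYS : DependsOn Y S) (hZT : DependsOn Z T) :
    IndepFun Y Z (Measure.pi μ) := by
  classical
  obtain ⟨x₀⟩ := nonempty_of_isProbabilityMeasure (Measure.pi μ)
  have hY_eq : Y = (Y ∘ updateFinset x₀ S) ∘ fun ω (i : S) ↦ ω i :=
    funext fun ω ↦ hYS fun i hi ↦ by simp [updateFinset, Finset.mem_coe.1 hi]
  have hZ_eq : Z = (Z ∘ updateFinset x₀ T) ∘ fun ω (i : T) ↦ ω i :=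
    funext fun ω ↦ hZT fun i hi ↦ by simp [updateFinset, Finset.mem_coe.1 hi]
  rw [hY_eq, hZ_eq]
  exact ((iIndepFun_pi (X := fun _ ↦ id) fun _ ↦ aemeasurable_id).indepFun_finset S T hST
    fun i ↦ measurable_pi_apply i).comp (hY.comp measurable_updateFinset)
    (hZ.comp measurable_updateFinset)

end ProbabilityTheory

section PairNeighborhood

variable {V : Type*} [Fintype V] [DecidableEq V]

def pairNeighborhood (a b : V) : Finset (Sym2 V) :=
  ((⊤ : SimpleGraph V).incidenceFinset a ∪ (⊤ : SimpleGraph V).incidenceFinset b).erase s(a, b)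

theorem card_pairNeighborhood_le (a b : V) : #(pairNeighborhood a b) ≤ 2 * Fintype.card V - 2 := by
  have h := (Finset.card_erase_le (a := s(a, b))).trans (Finset.card_union_le
    ((⊤ : SimpleGraph V).incidenceFinset a) ((⊤ : SimpleGraph V).incidenceFinset b))
  simp only [SimpleGraph.card_incidenceFinset_eq_degree, SimpleGraph.complete_graph_degree] at h
  unfold pairNeighborhood
  omega

theorem ne_of_mem_of_notMem_pairNeighborhood {a b v : V} {e : Sym2 V} (he : ¬ e.IsDiag)
    (hN : e ∉ pairNeighborhood a b) (hab : e ≠ s(a, b)) (hv : v ∈ e) : v ≠ a ∧ v ≠ b := by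
  have he' : e ∈ (⊤ : SimpleGraph V).edgeSet := by simpa using he
  simp only [pairNeighborhood, Finset.mem_erase, Finset.mem_union,
    SimpleGraph.mem_incidenceFinset, not_and, not_or] at hN
  obtain ⟨ha, hb⟩ := hN hab
  exact ⟨by rintro rfl; exact ha ⟨he', hv⟩, by rintro rfl; exact hb ⟨he', hv⟩⟩

end PairNeighborhood

section VertexLabels

variable {V α : Type*} {f : α → α → Bool}

def labelEdge (hf : ∀ x y, f x y = f y x) (e : Sym2 V) (ω : V → α) : Bool :=
  Sym2.lift ⟨fun a b ↦ f (ω a) (ω b), fun a b ↦ hf (ω a) (ω b)⟩ e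

variable (hf : ∀ x y, f x y = f y x)

@[simp]
theorem labelEdge_mk (a b : V) (ω : V → α) : labelEdge hf s(a, b) ω = f (ω a) (ω b) := rfl

theorem dependsOn_labelEdge (e : Sym2 V) : DependsOn (labelEdge hf e) {v | v ∈ e} := by
  induction e using Sym2.ind with
  | _ a b =>
    intro ω ω' h
    simp [h a (Sym2.mem_mk_left a b), h b (Sym2.mem_mk_right a b)]

variable [MeasurableSpace α]

theorem measurable_labelEdge (hf_meas : Measurable (uncurry f)) (e : Sym2 V) :
    Measurable (labelEdge hf e) := by
  induction e using Sym2.ind with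
  | _ a b =>
    show Measurable fun ω : V → α ↦ uncurry f (ω a, ω b)
    exact hf_meas.comp (by fun_prop)

variable [Fintype V] (ν : Measure α) [IsProbabilityMeasure ν]

theorem measure_labelEdge_eq_true {a b : V} (hab : a ≠ b)
    (hs : MeasurableSet {q : α × α | f q.1 q.2 = true}) :
    Measure.pi (fun _ : V ↦ ν) {ω | labelEdge hf s(a, b) ω = true} =
      ν.prod ν {q | f q.1 q.2 = true} := by
  have hindep := (iIndepFun_pi (μ := fun _ : V ↦ ν) (X := fun _ ↦ id)
    fun _ ↦ aemeasurable_id).indepFun hab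
  have hmap := (indepFun_iff_map_prod_eq_prod_map_map (measurable_pi_apply a).aemeasurable
    (measurable_pi_apply b).aemeasurable).1 hindep
  rw [(measurePreserving_eval _ a).map_eq, (measurePreserving_eval _ b).map_eq] at hmap
  rw [← hmap, Measure.map_apply ((measurable_pi_apply a).prodMk (measurable_pi_apply b)) hs]
  rfl

theorem indepFun_labelEdge_of_notMem_pairNeighborhood [DecidableEq V]
    (hf_meas : Measurable (uncurry f)) (a b : V) :
    IndepFun (labelEdge hf s(a, b))
      (fun ω (e : {e : Sym2 V // ¬ e.IsDiag ∧ e ∉ pairNeighborhood a b ∧ e ≠ s(a, b)}) ↦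
        labelEdge hf e.1 ω)
      (Measure.pi fun _ : V ↦ ν) := by
  refine indepFun_pi_of_dependsOn (S := {a, b}) (T := {a, b}ᶜ) disjoint_compl_right
    (measurable_labelEdge hf hf_meas _)
    (measurable_pi_lambda _ fun e ↦ measurable_labelEdge hf hf_meas e.1) ?_ ?_
  · exact (dependsOn_labelEdge hf _).mono fun v ↦ by simp
  · intro ω ω' h
    funext ⟨e, he, hN, hne⟩
    refine dependsOn_labelEdge hf e fun v hv ↦ h v ?_
    simpa [and_comm] using ne_of_mem_of_notMem_pairNeighborhood he hN hne hv

end VertexLabels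

noncomputable def DepGraph.ofVertexLabels (n : ℕ) (p : ℝ) {α : Type} [MeasurableSpace α]
    (ν : Measure α) [IsProbabilityMeasure ν] (f : α → α → Bool) (hf : ∀ x y, f x y = f y x)
    (hf_meas : Measurable (uncurry f)) (hp : ν.prod ν {q | f q.1 q.2 = true} = ENNReal.ofReal p) :
    DepGraph n p (2 * n - 2) where
  Ω := Fin n → α
  μ := Measure.pi fun _ ↦ ν
  X := labelEdge hf
  meas := measurable_labelEdge hf hf_meas
  edgeProb e he := by
    induction e using Sym2.ind with
    | _ a b =>
      rw [measure_labelEdge_eq_true hf ν (by simpa using he)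
        (hf_meas (measurableSet_singleton true)), hp]
  locDep e _ := by
    induction e using Sym2.ind with
    | _ a b =>
      refine ⟨pairNeighborhood a b, by simp [pairNeighborhood], ?_,
        indepFun_labelEdge_of_notMem_pairNeighborhood hf ν hf_meas a b⟩
      simpa using card_pairNeighborhood_le a b

theorem SimpleGraph.exists_isClique_card_le_two_mul_card {V : Type*} [Fintype V]
    (G : SimpleGraph V) (P : V → Prop) (hG : ∀ x y, x ≠ y → (P x ↔ P y) → G.Adj x y) :
    ∃ s : Finset V, G.IsClique (s : Set V) ∧ Fintype.card V ≤ 2 * #s := by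
  classical
  have hcard := Finset.card_filter_add_card_filter_not (s := Finset.univ) P
  rw [Finset.card_univ] at hcard
  have clique_of_side (Q : V → Prop) (hQ : ∀ x y, Q x → Q y → (P x ↔ P y)) [DecidablePred Q] :
      G.IsClique (Finset.univ.filter Q : Set V) := fun x hx y hy hxy ↦
    hG x y hxy (hQ x y (by simpa using hx) (by simpa using hy))
  rcases le_total #(Finset.univ.filter P) #(Finset.univ.filter (¬ P ·)) with h | h
  · exact ⟨_, clique_of_side (¬ P ·) (fun x y hx hy ↦ iff_of_false hx hy), by omega⟩
  · exact ⟨_, clique_of_side P (fun x y hx hy ↦ iff_of_true hx hy), by omega⟩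

def straddle (c : ℝ) : Set (ℝ × ℝ) :=
  Ioc c (1 / 2) ×ˢ Ioc (1 / 2) 1 ∪ Ioc (1 / 2) 1 ×ˢ Ioc c (1 / 2)

theorem measurableSet_straddle (c : ℝ) : MeasurableSet (straddle c) :=
  (measurableSet_Ioc.prod measurableSet_Ioc).union (measurableSet_Ioc.prod measurableSet_Ioc)

open scoped Classical in
noncomputable def halfSplitRule (c x y : ℝ) : Bool := decide ((x, y) ∉ straddle c)

theorem halfSplitRule_comm (c x y : ℝ) : halfSplitRule c x y = halfSplitRule c y x := by
  simp only [halfSplitRule, decide_eq_decide, straddle, mem_union, mem_prod]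
  tauto

theorem setOf_halfSplitRule_eq_true (c : ℝ) :
    {q : ℝ × ℝ | halfSplitRule c q.1 q.2 = true} = (straddle c)ᶜ := by
  ext ⟨x, y⟩
  simp [halfSplitRule]

theorem measurable_halfSplitRule (c : ℝ) : Measurable (uncurry (halfSplitRule c)) := by
  refine measurable_to_bool ?_
  change MeasurableSet {q : ℝ × ℝ | halfSplitRule c q.1 q.2 = true}
  rw [setOf_halfSplitRule_eq_true]
  exact (measurableSet_straddle c).compl

theorem halfSplitRule_eq_true_of_iff (c : ℝ) {x y : ℝ} (h : x ≤ 1 / 2 ↔ y ≤ 1 / 2) :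
    halfSplitRule c x y = true := by
  simp only [halfSplitRule, straddle, decide_eq_true_eq, mem_union, mem_prod, mem_Ioc]
  rintro (⟨⟨-, hx⟩, hy, -⟩ | ⟨⟨hx, -⟩, -, hy⟩)
  · exact (h.1 hx).not_gt hy
  · exact (h.2 hy).not_gt hx

instance : IsProbabilityMeasure (volume.restrict (Ioc (0 : ℝ) 1)) :=
  ⟨by simp [Real.volume_Ioc]⟩

theorem measure_halfSplitRule_eq_true {c : ℝ} (hc₀ : 0 ≤ c) (hc : c ≤ 1 / 2) :
    (volume.restrict (Ioc (0 : ℝ) 1)).prod (volume.restrict (Ioc 0 1))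
      {q | halfSplitRule c q.1 q.2 = true} = ENNReal.ofReal (c + 1 / 2) := by
  set ν := volume.restrict (Ioc (0 : ℝ) 1)
  have hIoc {a b : ℝ} (ha : 0 ≤ a) (hb : b ≤ 1) : ν (Ioc a b) = ENNReal.ofReal (b - a) := by
    rw [Measure.restrict_apply measurableSet_Ioc,
      inter_eq_self_of_subset_left (Ioc_subset_Ioc ha hb), Real.volume_Ioc]
  have hdisj : Disjoint (Ioc c (1 / 2) ×ˢ Ioc (1 / 2) 1) (Ioc (1 / 2) 1 ×ˢ Ioc c (1 / 2)) :=
    Set.disjoint_prod.2 (Or.inl (Set.disjoint_left.2 fun x hx hx' ↦ hx.2.not_gt hx'.1))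
  have hstraddle : ν.prod ν (straddle c) = ENNReal.ofReal (1 / 2 - c) := by
    rw [straddle, measure_union hdisj (measurableSet_Ioc.prod measurableSet_Ioc),
      Measure.prod_prod, Measure.prod_prod, hIoc hc₀ (by norm_num), hIoc (by norm_num) le_rfl,
      ← ENNReal.ofReal_mul (by linarith), ← ENNReal.ofReal_mul (by norm_num),
      ← ENNReal.ofReal_add (by nlinarith) (by nlinarith)]
    ring_nf
  rw [setOf_halfSplitRule_eq_true, prob_compl_eq_one_sub (measurableSet_straddle c), hstraddle, ← ENNReal.ofReal_one,
    ← ENNReal.ofReal_sub _ (by linarith)]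
  ring_nf

/-- **Lemma (a maximally dependent random graph with a huge clique).** For every integer
`n ≥ 2`, every `p` with `1/2 ≤ p < 1`, and `d = 2n - 2`, there is a `d`-dependent random
graph distribution `G(n,p,d)` whose sampled graph contains a clique on at least `n/2`
vertices with probability 1. -/
theorem half_clique_construction :
    ∀ n : ℕ, 2 ≤ n → ∀ p : ℝ, 1 / 2 ≤ p → p < 1 →
      ∃ G : DepGraph n p (2 * n - 2),
        G.μ {ω | ∃ s : Finset (Fin n), (G.graph ω).IsClique ↑s ∧
          (n : ℝ) / 2 ≤ (s.card : ℝ)} = 1 := by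
  intro n _ p hp hp1
  have hc₀ : 0 ≤ p - 1 / 2 := by linarith
  have hc : p - 1 / 2 ≤ 1 / 2 := by linarith
  let G := DepGraph.ofVertexLabels n p (volume.restrict (Ioc 0 1)) (halfSplitRule (p - 1 / 2))
    (halfSplitRule_comm _) (measurable_halfSplitRule _)
    (by simpa using measure_halfSplitRule_eq_true hc₀ hc)
  refine ⟨G, (congrArg _ (Set.eq_univ_of_forall fun ω ↦ ?_)).trans measure_univ⟩
  obtain ⟨s, hs, hcard⟩ := (G.graph ω).exists_isClique_card_le_two_mul_card
    (fun v ↦ ω v ≤ 1 / 2) fun x y hxy hside ↦ ⟨hxy, halfSplitRule_eq_true_of_iff _ hside⟩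
  refine ⟨s, hs, ?_⟩
  rw [Fintype.card_fin] at hcard
  rw [div_le_iff₀ two_pos]
  exact_mod_cast (by omega : n ≤ #s * 2)
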